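/- arXiv:1008.2583 — 3 statements merged into one kernel-verified Lean document; each statement's English description precedes it below -/
import Mathlib

section
/- Let k > 2 be an even integer and n > 2k an integer such that n is congruent to 0, 2, k−1, or k+1 modulo 2k. Then α(P(n,k)) = ⌊(2k−1)n/(2k)⌋. -/
/-!
Call a column `i` of `P(n,k)` empty for an independent set `S` if neither `u_i` nor `v_i` lies
in `S`. Because of the rung `u_i v_i`, `|S|` is at most `n` minus the number of empty columns,
so the upper bound amounts to `n ≤ 2k · #empty`. Here `k` even matters: `2k` consecutive
occupied columns force a rigid pattern, after which the next column is empty and *blocked*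
(no inner vertex at an even offset below `k`). From a blocked column the next gap is at most
`2k`, and equal to `2k` only if its end is blocked again. So every gap `g` between consecutive
empty columns satisfies `g + [start blocked] ≤ 2k + [end blocked]`, and summing a potential
around the cycle gives `n ≤ 2k · #empty`.

For the lower bound, write `n = 2kq + r`. Blocks of length `2k` with a single empty column,
followed by a tail of length `r` with a single empty column, can be filled to an independent
set when `r ∈ {0, 2, k - 1, k + 1}`; it has `n - ⌈n/(2k)⌉ = ⌊(2k - 1)n/(2k)⌋` vertices.
-/

namespace GP

/-- Adjacency generating relation for the generalized Petersen graph `P(n,k)`: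
`Sum.inl i` is the outer vertex `u_i`, `Sum.inr i` is the inner vertex `v_i`. -/
def adjFun (n k : ℕ) : (ZMod n ⊕ ZMod n) → (ZMod n ⊕ ZMod n) → Prop
  | Sum.inl i, Sum.inl j => j = i + 1
  | Sum.inl i, Sum.inr j => j = i
  | Sum.inr i, Sum.inr j => j = i + (k : ZMod n)
  | _, _ => False

/-- The generalized Petersen graph `P(n,k)`. -/
def P (n k : ℕ) : SimpleGraph (ZMod n ⊕ ZMod n) :=
  SimpleGraph.fromRel (adjFun n k)

/-- `s` is an independent set of vertices in `G`. -/
def IsIndep {V : Type*} (G : SimpleGraph V) (s : Finset V) : Prop :=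
  ∀ v ∈ s, ∀ w ∈ s, ¬ G.Adj v w

/-- The independence number of a graph. -/
noncomputable def indepNum {V : Type*} (G : SimpleGraph V) : ℕ :=
  sSup {m | ∃ s : Finset V, IsIndep G s ∧ s.card = m}

/-- `α(P(n,k))`. -/
noncomputable def alpha (n k : ℕ) : ℕ := indepNum (P n k)

/-- The outer vertex `u_i`. -/
def u (n : ℕ) (i : ZMod n) : ZMod n ⊕ ZMod n := Sum.inl i

/-- The inner vertex `v_i`. -/
def v (n : ℕ) (i : ZMod n) : ZMod n ⊕ ZMod n := Sum.inr i

/-- The `2k`-segment `I_t = {u_t, …, u_{t+2k-1}} ∪ {v_t, …, v_{t+2k-1}}`. -/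
def segment (n k : ℕ) (t : ZMod n) : Finset (ZMod n ⊕ ZMod n) :=
  ((Finset.range (2*k)).image fun j : ℕ => u n (t + (j : ZMod n))) ∪
  ((Finset.range (2*k)).image fun j : ℕ => v n (t + (j : ZMod n)))

/-- `outer j` and `inner j` say that the outer, resp. inner, vertex of column `j` is chosen;
these are the independence conditions along the two rails of an infinite ladder. -/
structure LadderIndep (k : ℕ) (outer inner : ℕ → Prop) : Prop where
  not_outer_succ : ∀ j, outer j → ¬ outer (j + 1)
  not_inner_add : ∀ j, inner j → ¬ inner (j + k)

def Blocked (k : ℕ) (inner : ℕ → Prop) : Prop :=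
  ∀ j < k, Even j → ¬ inner j

open Classical in
noncomputable def blockedWeight (k : ℕ) (inner : ℕ → Prop) : ℕ :=
  if Blocked k inner then 1 else 0

namespace LadderIndep

variable {k : ℕ} {outer inner : ℕ → Prop}

lemma shift (h : LadderIndep k outer inner) (t : ℕ) :
    LadderIndep k (fun j => outer (t + j)) (fun j => inner (t + j)) :=
  ⟨fun j => by simpa [add_assoc] using h.not_outer_succ (t + j),
    fun j => by simpa [add_assoc] using h.not_inner_add (t + j)⟩

lemma not_outer_of_eq (h : LadderIndep k outer inner) {i j : ℕ} (hij : j = i + 1)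
    (hi : outer i) : ¬ outer j :=
  hij ▸ h.not_outer_succ i hi

lemma not_inner_of_eq (h : LadderIndep k outer inner) {i j : ℕ} (hij : j = i + k)
    (hi : inner i) : ¬ inner j :=
  hij ▸ h.not_inner_add i hi

lemma inner_iff_odd_of_full (h : LadderIndep k outer inner) (hke : Even k) (hk : 2 < k)
    (hfull : ∀ j < 2 * k, outer j ∨ inner j) : ∀ j < k, inner j ↔ Odd j := by
  have adj : ∀ j, j + 1 < 2 * k → inner j ∨ inner (j + 1) := fun j hj => by
    rcases hfull j (by omega) with ho | hi
    · exact Or.inr ((hfull (j + 1) hj).resolve_left (h.not_outer_succ j ho))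
    · exact Or.inl hi
  have step : ∀ j, j + 1 < k → (inner (j + 1) ↔ ¬ inner j) ∧ (inner (j + k) ↔ ¬ inner j) :=
    fun j hj => by
      have h1 := h.not_inner_add j
      have h2 := h.not_inner_add (j + 1)
      have a1 := adj j (by omega)
      have a2 := adj (j + k) (by omega)
      rw [show j + 1 + k = j + k + 1 by omega] at h2
      tauto
  have alt : ∀ j < k, inner j ↔ (Even j ↔ inner 0) := by
    intro j hj
    induction j with
    | zero => simp
    | succ j ih => rw [(step j hj).1, ih (by omega), Nat.even_add_one]; tauto
  -- with `inner 0`, parity would make columns `k - 1` and `k` both outer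
  have h0 : ¬ inner 0 := by
    intro h0
    have hodd : ¬ Even (k - 1) := by
      rw [Nat.even_sub (by omega)]; simp [hke]
    have := adj (k - 1) (by omega)
    rw [show k - 1 + 1 = 0 + k by omega, (step 0 (by omega)).2, alt (k - 1) (by omega)] at this
    tauto
  intro j hj
  rw [alt j hj, ← Nat.not_even_iff_odd]
  tauto

lemma blocked_of_full (h : LadderIndep k outer inner) (hke : Even k) (hk : 2 < k)
    (hfull : ∀ j < 2 * k, outer j ∨ inner j) : Blocked k inner := fun j hj he hi =>
  Nat.not_odd_iff_even.mpr he ((h.inner_iff_odd_of_full hke hk hfull j hj).mp hi)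

lemma blocked_propagate (h : LadderIndep k outer inner) (hke : Even k) (hk : 2 < k)
    (hb : Blocked k inner) (hocc : ∀ j, 0 < j → j < 2 * k → outer j ∨ inner j) :
    ¬ outer (2 * k) ∧ Blocked k (fun j => inner (2 * k + j)) := by
  simp only [Blocked, Nat.even_iff] at hb ⊢
  have hk2 := Nat.even_iff.mp hke
  -- the columns `1, …, 2k - 1` are forced: inner exactly at odd offsets below `k`
  -- and at even offsets from `k` on
  have outer_even : ∀ j, 0 < j → j < k → j % 2 = 0 → outer j := fun j h0 hj he =>
    (hocc j h0 (by omega)).resolve_right (hb j hj he)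
  have inner_odd : ∀ j < k, j % 2 = 1 → inner j := by
    intro j hj ho
    refine (hocc j (by omega) (by omega)).resolve_left fun hu => ?_
    rcases lt_or_ge (j + 1) k with hlt | hge
    · exact h.not_outer_succ j hu (outer_even _ (by omega) hlt (by omega))
    · exact h.not_outer_of_eq (by omega) (outer_even (j - 1) (by omega) (by omega) (by omega)) hu
  have outer_odd_high : ∀ j, k < j → j < 2 * k → j % 2 = 1 → outer j := fun j h1 h2 ho =>
    (hocc j (by omega) h2).resolve_right
      (h.not_inner_of_eq (by omega) (inner_odd (j - k) (by omega) (by omega)))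
  have inner_even_high : ∀ j, k ≤ j → j + 1 < 2 * k → j % 2 = 0 → inner j :=
    fun j h1 h2 he => (hocc j (by omega) (by omega)).resolve_left fun hu =>
      h.not_outer_succ j hu (outer_odd_high (j + 1) (by omega) h2 (by omega))
  exact ⟨h.not_outer_of_eq (by omega) (outer_odd_high (2 * k - 1) (by omega) (by omega) (by omega)),
    fun j hj he => h.not_inner_of_eq (by omega)
      (inner_even_high (k + j) (by omega) (by omega) (by omega))⟩

lemma exists_empty (h : LadderIndep k outer inner) (hke : Even k) (hk : 2 < k) :
    ∃ j ≤ 2 * k, ¬ outer j ∧ ¬ inner j := by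
  by_contra! hocc
  have hfull : ∀ j < 2 * k, outer j ∨ inner j := fun j hj =>
    or_iff_not_imp_left.mpr (hocc j hj.le)
  have ⟨ho, hb⟩ := h.blocked_propagate hke hk (h.blocked_of_full hke hk hfull)
    fun j _ hj => hfull j hj
  exact hb 0 (by omega) ⟨0, rfl⟩ (by simpa using hocc (2 * k) le_rfl ho)

lemma gap_add_blockedWeight_le (h : LadderIndep k outer inner) (hke : Even k) (hk : 2 < k)
    {g : ℕ} (hocc : ∀ j, 0 < j → j < g → outer j ∨ inner j) :
    g + blockedWeight k inner ≤ 2 * k + blockedWeight k (fun j => inner (g + j)) := by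
  have gap_le : ∀ c, 0 < c → ¬ outer c → Blocked k (fun j => inner (c + j)) → g ≤ c :=
    fun c hc ho hb => not_lt.mp fun hlt =>
      (hocc c hc hlt).elim ho (by simpa using hb 0 (by omega) ⟨0, rfl⟩)
  unfold blockedWeight
  by_cases hb : Blocked k inner
  · rcases lt_or_ge g (2 * k) with hlt | hge
    · split_ifs <;> omega
    obtain ⟨ho, hb'⟩ := h.blocked_propagate hke hk hb fun j h0 hj => hocc j h0 (by omega)
    obtain rfl : g = 2 * k := le_antisymm (gap_le _ (by omega) ho hb') hge
    rw [if_pos hb, if_pos hb']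
  · rcases le_or_gt g (2 * k) with hle | hgt
    · split_ifs <;> omega
    have hfull : ∀ j < 2 * k, outer (1 + j) ∨ inner (1 + j) := fun j hj =>
      hocc (1 + j) (by omega) (by omega)
    have h1 := h.shift 1
    obtain ⟨ho, hb'⟩ := h1.blocked_propagate hke hk (h1.blocked_of_full hke hk hfull)
      fun j _ hj => hfull j hj
    simp only [← add_assoc] at hb'
    obtain rfl : g = 1 + 2 * k := le_antisymm (gap_le _ (by omega) ho hb') (by omega)
    rw [if_neg hb, if_pos hb']
    omega

end LadderIndep

section Cyclic

variable {n k : ℕ}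

noncomputable def distPrev (E : Finset (ZMod n)) (i : ZMod n) : ℕ := sInf {d : ℕ | i - d ∈ E}

lemma sub_distPrev_mem {E : Finset (ZMod n)} (hE : ∀ i : ZMod n, ∃ d : ℕ, i - d ∈ E)
    (i : ZMod n) : i - distPrev E i ∈ E :=
  Nat.sInf_mem (hE i)

lemma distPrev_succ_of_notMem {E : Finset (ZMod n)} (hE : ∀ i : ZMod n, ∃ d : ℕ, i - d ∈ E)
    {i : ZMod n} (hi : i + 1 ∉ E) :
    distPrev E (i + 1) = distPrev E i + 1 := by
  refine le_antisymm (Nat.sInf_le ?_) ?_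
  · simpa [add_sub_add_right_eq_sub] using sub_distPrev_mem hE i
  have hpos : distPrev E (i + 1) ≠ 0 := fun h0 =>
    hi (by simpa [h0] using sub_distPrev_mem hE (i + 1))
  have : distPrev E i ≤ distPrev E (i + 1) - 1 := Nat.sInf_le <| by
    have := sub_distPrev_mem hE (i + 1)
    show i - ((distPrev E (i + 1) - 1 : ℕ) : ZMod n) ∈ E
    convert this using 1
    rw [Nat.cast_sub (by omega)]; push_cast; ring
  omega

noncomputable def gapPotential (k : ℕ) (V : ZMod n → Prop) (E : Finset (ZMod n))
    (i : ZMod n) : ℕ :=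
  distPrev E i + blockedWeight k (fun j => V (i - distPrev E i + j))

variable {U V : ZMod n → Prop}

lemma gapPotential_step (hke : Even k) (hk : 2 < k)
    (hUV : ∀ t : ZMod n, LadderIndep k (fun j => U (t + j)) (fun j => V (t + j)))
    {E : Finset (ZMod n)} (hE : ∀ i, i ∈ E ↔ ¬ U i ∧ ¬ V i)
    (hex : ∀ i : ZMod n, ∃ d : ℕ, i - d ∈ E) (i : ZMod n) :
    gapPotential k V E i + 1 ≤
      (if i + 1 ∈ E then 2 * k else 0) + gapPotential k V E (i + 1) := by
  unfold gapPotential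
  by_cases hi : i + 1 ∈ E
  · have hd : distPrev E (i + 1) = 0 := Nat.sInf_eq_zero.mpr (Or.inl (by simpa using hi))
    set p := i - distPrev E i
    have hocc : ∀ j, 0 < j → j < distPrev E i + 1 → U (p + j) ∨ V (p + j) := fun j h0 hj => by
      have := Nat.notMem_of_lt_sInf (show distPrev E i - j < distPrev E i by omega)
      rw [Set.mem_ofPred_eq, hE, not_and_or, not_not, not_not] at this
      convert this using 3 <;> (rw [Nat.cast_sub (by omega)]; ring)
    have := (hUV p).gap_add_blockedWeight_le hke hk hocc
    have hshift : (fun j : ℕ => V (p + ((distPrev E i + 1 + j : ℕ) : ZMod n))) =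
        fun j : ℕ => V (i + 1 - ((0 : ℕ) : ZMod n) + j) := by
      funext j; congr 1; push_cast; ring
    rw [if_pos hi, hd, ← hshift]
    omega
  · rw [if_neg hi, distPrev_succ_of_notMem hex hi, Nat.cast_succ, add_sub_add_right_eq_sub]
    omega

theorem le_two_mul_card_empty [NeZero n] (hke : Even k) (hk : 2 < k)
    (hUV : ∀ t : ZMod n, LadderIndep k (fun j => U (t + j)) (fun j => V (t + j)))
    {E : Finset (ZMod n)} (hE : ∀ i, i ∈ E ↔ ¬ U i ∧ ¬ V i) :
    n ≤ 2 * k * E.card := by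
  have hex : ∀ i : ZMod n, ∃ d : ℕ, i - d ∈ E := fun i => by
    obtain ⟨j, hj, hempty⟩ := (hUV (i - (2 * k : ℕ))).exists_empty hke hk
    refine ⟨2 * k - j, (hE _).mpr ?_⟩
    rwa [Nat.cast_sub hj, sub_sub_eq_add_sub, add_sub_right_comm]
  have hsum := Finset.sum_le_sum fun i (_ : i ∈ Finset.univ) =>
    gapPotential_step hke hk hUV hE hex i
  have hrot : ∀ f : ZMod n → ℕ, ∑ i, f (i + 1) = ∑ i, f i := fun f =>
    Fintype.sum_equiv (Equiv.addRight 1) _ _ fun _ => rfl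
  rw [Finset.sum_add_distrib, Finset.sum_add_distrib, hrot (gapPotential k V E),
    hrot fun i => if i ∈ E then 2 * k else 0, Finset.sum_ite_mem, Finset.univ_inter] at hsum
  simp only [Finset.sum_const, Finset.card_univ, ZMod.card, smul_eq_mul, mul_one] at hsum
  linarith

end Cyclic

section Petersen

variable {n k : ℕ}

lemma natCast_ne_zero_of_pos_of_lt {a : ℕ} (h0 : 0 < a) (ha : a < n) : (a : ZMod n) ≠ 0 := by
  rw [Ne, ZMod.natCast_eq_zero_iff]
  exact Nat.not_dvd_of_pos_of_lt h0 ha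

lemma P_adj_inl_inr (i : ZMod n) : (P n k).Adj (Sum.inl i) (Sum.inr i) :=
  (SimpleGraph.fromRel_adj _ _ _).mpr ⟨Sum.inl_ne_inr, Or.inl rfl⟩

lemma P_adj_inl_succ (hn : 1 < n) (i : ZMod n) : (P n k).Adj (Sum.inl i) (Sum.inl (i + 1)) := by
  refine (SimpleGraph.fromRel_adj _ _ _).mpr ⟨?_, Or.inl rfl⟩
  simpa using natCast_ne_zero_of_pos_of_lt (n := n) one_pos hn

lemma P_adj_inr_add (hk0 : 0 < k) (hkn : k < n) (i : ZMod n) :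
    (P n k).Adj (Sum.inr i) (Sum.inr (i + k)) := by
  refine (SimpleGraph.fromRel_adj _ _ _).mpr ⟨?_, Or.inl rfl⟩
  simpa using natCast_ne_zero_of_pos_of_lt hk0 hkn

lemma ladderIndep_of_isIndep (hk0 : 0 < k) (hkn : k < n) {S : Finset (ZMod n ⊕ ZMod n)}
    (hS : IsIndep (P n k) S) (t : ZMod n) :
    LadderIndep k (fun j => Sum.inl (t + j) ∈ S) (fun j => Sum.inr (t + j) ∈ S) where
  not_outer_succ j h1 h2 :=
    hS _ h1 _ (by simpa [add_assoc] using h2) (P_adj_inl_succ (by omega) _)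
  not_inner_add j h1 h2 := hS _ h1 _ (by simpa [add_assoc] using h2) (P_adj_inr_add hk0 hkn _)

lemma card_add_card_empty_le [NeZero n] {S : Finset (ZMod n ⊕ ZMod n)}
    (hS : IsIndep (P n k) S) :
    S.card + (Finset.univ.filter fun i => Sum.inl i ∉ S ∧ Sum.inr i ∉ S).card ≤ n := by
  set col : ZMod n ⊕ ZMod n → ZMod n := Sum.elim id id
  have hinj : Set.InjOn col S := by
    rintro (i | i) hi (j | j) hj (hij : i = j) <;> subst hij
    · rfl
    · exact (hS _ hi _ hj (P_adj_inl_inr i)).elim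
    · exact (hS _ hj _ hi (P_adj_inl_inr i)).elim
    · rfl
  have hdisj : Disjoint (S.image col)
      (Finset.univ.filter fun i => Sum.inl i ∉ S ∧ Sum.inr i ∉ S) := by
    simp only [Finset.disjoint_left, Finset.mem_image, Finset.mem_filter, Finset.mem_univ,
      true_and]
    rintro _ ⟨(i | i), hi, rfl⟩ ⟨h1, h2⟩
    exacts [h1 hi, h2 hi]
  rw [← Finset.card_image_of_injOn hinj, ← Finset.card_union_of_disjoint hdisj]
  exact (Finset.card_le_univ _).trans_eq (ZMod.card n)

theorem card_le_of_isIndep (hke : Even k) (hk : 2 < k) (hn : 2 * k < n)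
    {S : Finset (ZMod n ⊕ ZMod n)} (hS : IsIndep (P n k) S) :
    S.card ≤ n - ((n - 1) / (2 * k) + 1) := by
  have : NeZero n := ⟨by omega⟩
  set E := Finset.univ.filter fun i : ZMod n => Sum.inl i ∉ S ∧ Sum.inr i ∉ S
  have hE : n ≤ 2 * k * E.card :=
    le_two_mul_card_empty (U := fun i => Sum.inl i ∈ S) (V := fun i => Sum.inr i ∈ S)
      hke hk (ladderIndep_of_isIndep (by omega) (by omega) hS) (by simp [E])
  have : (n - 1) / (2 * k) < E.card :=
    (Nat.div_lt_iff_lt_mul (by omega)).mpr (by rw [mul_comm] at hE; omega)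
  have : S.card + E.card ≤ n := card_add_card_empty_le hS
  omega

end Petersen

def patternCell (B T : ℕ → Prop) (k q i : ℕ) : Prop :=
  if i < 2 * k * q then B (i % (2 * k)) else T (i - 2 * k * q)

section patternCell

variable {B T : ℕ → Prop} {k q : ℕ}

lemma patternCell_of_block {m j i : ℕ} (hm : m < q) (hj : j < 2 * k) (hi : i = 2 * k * m + j) :
    patternCell B T k q i ↔ B j := by
  have : 2 * k * (m + 1) ≤ 2 * k * q := Nat.mul_le_mul_left _ hm
  rw [patternCell, if_pos (by rw [mul_add] at this; omega), hi, Nat.mul_add_mod,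
    Nat.mod_eq_of_lt hj]

lemma patternCell_of_tail {t i : ℕ} (hi : i = 2 * k * q + t) : patternCell B T k q i ↔ T t := by
  rw [patternCell, if_neg (by omega), hi, Nat.add_sub_cancel_left]

lemma patternCell_cases (i : ℕ) :
    (∃ m j, m < q ∧ j < 2 * k ∧ i = 2 * k * m + j ∧ (patternCell B T k q i ↔ B j)) ∨
      ∃ t, i = 2 * k * q + t ∧ (patternCell B T k q i ↔ T t) := by
  rcases lt_or_ge i (2 * k * q) with hi | hi
  · have h2k : 0 < 2 * k := Nat.pos_of_ne_zero fun h => by simp [h] at hi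
    have hdm := (Nat.div_add_mod i (2 * k)).symm
    have hm : i / (2 * k) < q := (Nat.div_lt_iff_lt_mul h2k).mpr (by linarith)
    exact Or.inl ⟨_, _, hm, Nat.mod_lt _ h2k, hdm, patternCell_of_block hm (Nat.mod_lt _ h2k) hdm⟩
  · exact Or.inr ⟨_, (Nat.add_sub_of_le hi).symm, patternCell_of_tail (Nat.add_sub_of_le hi).symm⟩

end patternCell

/-! In a block, inner and outer vertices alternate, starting with an inner one, with a phase
change between offsets `k - 2` and `k - 1`; the last column is empty. The tail alternates
starting with an inner vertex (or is a single outer vertex if `r = 2`), and its last column is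
empty. -/

def blockInner (k j : ℕ) : Prop := j + 1 < 2 * k ∧ (j % 2 = 0 ↔ j + 1 < k)

def blockOuter (k j : ℕ) : Prop := j + 1 < 2 * k ∧ (j % 2 = 1 ↔ j + 1 < k)

def tailInner (r t : ℕ) : Prop := t + 1 < r ∧ r ≠ 2 ∧ t % 2 = 0

def tailOuter (r t : ℕ) : Prop := t + 1 < r ∧ (r = 2 ∨ t % 2 = 1)

section Extremal

variable {k q r : ℕ}

lemma outer_not_outer (hke : Even k) {x y : ℕ} (hx : x < 2 * k * q + r)
    (hxy : y = x + 1 ∨ y + (2 * k * q + r) = x + 1)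
    (hox : patternCell (blockOuter k) (tailOuter r) k q x) :
    ¬ patternCell (blockOuter k) (tailOuter r) k q y := by
  have hk2 := Nat.even_iff.mp hke
  rcases patternCell_cases (B := blockOuter k) (T := tailOuter r) (k := k) (q := q) x with
    ⟨m, j, hm, hj, rfl, hcell⟩ | ⟨t, rfl, hcell⟩
  · rw [hcell, blockOuter] at hox
    have : 2 * k * (m + 1) ≤ 2 * k * q := Nat.mul_le_mul_left _ hm
    rw [patternCell_of_block hm (j := j + 1) (by omega) (by rw [mul_add] at this; omega),
      blockOuter]
    omega
  · rw [hcell, tailOuter] at hox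
    rw [patternCell_of_tail (t := t + 1) (by omega), tailOuter]
    omega

lemma inner_not_inner (hke : Even k) (hk : 2 < k) (hq : 0 < q) (hr : r < 2 * k)
    (hres : r = 0 ∨ r = 2 ∨ r = k - 1 ∨ r = k + 1) {x y : ℕ} (hx : x < 2 * k * q + r)
    (hy : y < 2 * k * q + r) (hxy : y = x + k ∨ y + (2 * k * q + r) = x + k)
    (hix : patternCell (blockInner k) (tailInner r) k q x) :
    ¬ patternCell (blockInner k) (tailInner r) k q y := by
  have hk2 := Nat.even_iff.mp hke
  rcases patternCell_cases (B := blockInner k) (T := tailInner r) (k := k) (q := q) x with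
    ⟨m, j, hm, hj, rfl, hcell⟩ | ⟨t, rfl, hcell⟩
  · rw [hcell, blockInner] at hix
    have hnext : 2 * k * (m + 1) = 2 * k * m + 2 * k := by ring
    have hle : 2 * k * (m + 1) ≤ 2 * k * q := Nat.mul_le_mul_left _ hm
    rcases lt_or_ge j k with hjk | hjk
    · rw [patternCell_of_block hm (j := j + k) (by omega) (by omega), blockInner]
      omega
    rcases lt_or_ge (m + 1) q with hmq | hmq
    · have : 2 * k * (m + 2) ≤ 2 * k * q := Nat.mul_le_mul_left _ hmq
      rw [patternCell_of_block hmq (j := j - k) (by omega) (by rw [mul_add] at this; omega),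
        blockInner]
      omega
    obtain rfl : m + 1 = q := by omega
    rcases lt_or_ge (j - k) r with hjr | hjr
    · rw [patternCell_of_tail (t := j - k) (by omega), tailInner]
      omega
    · rw [patternCell_of_block hq (m := 0) (j := j - k - r) (by omega) (by omega), blockInner]
      omega
  · rw [hcell, tailInner] at hix
    rcases lt_or_ge (t + k) r with htr | htr
    · rw [patternCell_of_tail (t := t + k) (by omega), tailInner]
      omega
    · rw [patternCell_of_block hq (m := 0) (j := t + k - r) (by omega) (by omega), blockInner]
      omega

lemma not_outer_and_inner (x : ℕ) :
    ¬ (patternCell (blockOuter k) (tailOuter r) k q x ∧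
      patternCell (blockInner k) (tailInner r) k q x) := by
  unfold patternCell blockOuter blockInner tailOuter tailInner
  split_ifs <;> omega

/-- An empty cell is the last one of its block or of the whole word. -/
lemma eq_min_of_empty (hr : r < 2 * k) {x : ℕ} (hx : x < 2 * k * q + r)
    (hout : ¬ patternCell (blockOuter k) (tailOuter r) k q x)
    (hin : ¬ patternCell (blockInner k) (tailInner r) k q x) :
    x = min (2 * k * (x / (2 * k)) + 2 * k - 1) (2 * k * q + r - 1) := by
  have h2k : 0 < 2 * k := by omega
  rcases patternCell_cases (B := blockOuter k) (T := tailOuter r) (k := k) (q := q) x with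
    ⟨m, j, hm, hj, rfl, hcell⟩ | ⟨t, rfl, hcell⟩
  · rw [hcell, blockOuter] at hout
    rw [patternCell_of_block hm hj rfl, blockInner] at hin
    have : 2 * k * (m + 1) ≤ 2 * k * q := Nat.mul_le_mul_left _ hm
    rw [Nat.mul_add_div h2k, Nat.div_eq_of_lt hj, add_zero]
    rw [mul_add] at this
    omega
  · rw [hcell, tailOuter] at hout
    rw [patternCell_of_tail rfl, tailInner] at hin
    rw [Nat.mul_add_div h2k, Nat.div_eq_of_lt (by omega), add_zero]
    omega

end Extremal

section ExtremalSet

variable {n k q r : ℕ}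

lemma val_add_eq_or [NeZero n] (a b : ZMod n) :
    (a + b).val = a.val + b.val ∨ (a + b).val + n = a.val + b.val :=
  (lt_or_ge _ n).imp ZMod.val_add_of_lt fun h => (ZMod.val_add_val_of_le h).symm

open Classical in
/-- The extremal independent set, for `n = 2kq + r`. -/
noncomputable def extremalSet (n k q r : ℕ) [NeZero n] : Finset (ZMod n ⊕ ZMod n) :=
  (Finset.univ.filter fun i : ZMod n => patternCell (blockOuter k) (tailOuter r) k q i.val).disjSum
    (Finset.univ.filter fun i : ZMod n => patternCell (blockInner k) (tailInner r) k q i.val)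

lemma isIndep_extremalSet [NeZero n] (hke : Even k) (hk : 2 < k) (hq : 0 < q) (hr : r < 2 * k)
    (hres : r = 0 ∨ r = 2 ∨ r = k - 1 ∨ r = k + 1) (hn : 2 * k * q + r = n) :
    IsIndep (P n k) (extremalSet n k q r) := by
  have hval_one : (1 : ZMod n).val = 1 := by
    have : Fact (1 < n) := ⟨by nlinarith⟩
    exact ZMod.val_one n
  have hval_k : (k : ZMod n).val = k := ZMod.val_natCast_of_lt (by nlinarith)
  have hnot : ∀ x ∈ extremalSet n k q r, ∀ y ∈ extremalSet n k q r, ¬ adjFun n k x y := by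
    subst hn
    rintro (i | i) hi (j | j) hj hadj <;>
      simp only [adjFun, extremalSet, Finset.inl_mem_disjSum, Finset.inr_mem_disjSum,
        Finset.mem_filter, Finset.mem_univ, true_and] at hadj hi hj <;> subst hadj
    · have := val_add_eq_or i 1
      rw [hval_one] at this
      exact outer_not_outer hke i.val_lt this hi hj
    · exact not_outer_and_inner _ ⟨hi, hj⟩
    · have := val_add_eq_or i k
      rw [hval_k] at this
      exact inner_not_inner hke hk hq hr hres i.val_lt (i + k).val_lt this hi hj
  intro x hx y hy hadj
  obtain ⟨-, h | h⟩ := (SimpleGraph.fromRel_adj _ _ _).mp hadj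
  exacts [hnot x hx y hy h, hnot y hy x hx h]

open Classical in
lemma card_extremalSet [NeZero n] (hr : r < 2 * k) (hn : 2 * k * q + r = n) :
    n - ((n - 1) / (2 * k) + 1) ≤ (extremalSet n k q r).card := by
  set O := Finset.univ.filter fun i : ZMod n => patternCell (blockOuter k) (tailOuter r) k q i.val
  set I := Finset.univ.filter fun i : ZMod n => patternCell (blockInner k) (tailInner r) k q i.val
  set E := Finset.univ.filter fun i : ZMod n =>
    ¬ patternCell (blockOuter k) (tailOuter r) k q i.val ∧
      ¬ patternCell (blockInner k) (tailInner r) k q i.val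
  have hE : E.card ≤ (n - 1) / (2 * k) + 1 := by
    rw [← Finset.card_range ((n - 1) / (2 * k) + 1)]
    refine Finset.card_le_card_of_injOn (fun i => i.val / (2 * k)) (fun i _ => ?_)
      fun i hi j hj hij => ZMod.val_injective n ?_
    · simpa [Nat.lt_succ_iff] using
        Nat.div_le_div_right (c := 2 * k) (Nat.le_sub_one_of_lt i.val_lt)
    · simp only [E, Finset.coe_filter, Finset.mem_univ, true_and, Set.mem_ofPred_eq] at hi hj
      subst hn
      rw [eq_min_of_empty hr i.val_lt hi.1 hi.2, eq_min_of_empty hr j.val_lt hj.1 hj.2]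
      simp only at hij
      rw [hij]
  have hcover : n ≤ O.card + I.card + E.card := calc
    n = (Finset.univ : Finset (ZMod n)).card := (ZMod.card n).symm
    _ ≤ (O ∪ I ∪ E).card := Finset.card_le_card fun i _ => by
      simp only [O, I, E, Finset.mem_union, Finset.mem_filter, Finset.mem_univ, true_and]
      tauto
    _ ≤ O.card + I.card + E.card :=
      (Finset.card_union_le _ _).trans (add_le_add_left (Finset.card_union_le _ _) _)
  have : (extremalSet n k q r).card = O.card + I.card := Finset.card_disjSum _ _
  omega

end ExtremalSet

lemma indepNum_eq_of_forall_le {V : Type*} {G : SimpleGraph V} {M : ℕ}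
    (hub : ∀ s, IsIndep G s → s.card ≤ M) (hlb : ∃ s, IsIndep G s ∧ M ≤ s.card) :
    indepNum G = M := by
  obtain ⟨s, hs, hM⟩ := hlb
  have hbdd : BddAbove {m | ∃ s : Finset V, IsIndep G s ∧ s.card = m} :=
    ⟨M, by rintro _ ⟨t, ht, rfl⟩; exact hub t ht⟩
  refine le_antisymm (csSup_le ⟨s.card, s, hs, rfl⟩ ?_) (hM.trans (le_csSup hbdd ⟨s, hs, rfl⟩))
  rintro _ ⟨t, ht, rfl⟩
  exact hub t ht

/-- For even `k > 2` and `n > 2k` with `n ≡ 0, 2, k−1` or `k+1 (mod 2k)`,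
`α(P(n,k)) = ⌊(2k−1)n/(2k)⌋`. -/
theorem alpha_exact_special_residues (n k : ℕ) (hke : Even k) (hk : 2 < k)
    (hn : 2 * k < n)
    (hres : n % (2 * k) = 0 ∨ n % (2 * k) = 2 ∨ n % (2 * k) = k - 1 ∨ n % (2 * k) = k + 1) :
    alpha n k = (2 * k - 1) * n / (2 * k) := by
  have : NeZero n := ⟨by omega⟩
  have h2k : 0 < 2 * k := by omega
  have hfloor : (2 * k - 1) * n / (2 * k) = n - ((n - 1) / (2 * k) + 1) := by
    rw [Nat.sub_mul, one_mul, ← Nat.mul_sub_div (n - 1) (2 * k) n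
      ((Nat.sub_lt (by omega) one_pos).trans_le (Nat.le_mul_of_pos_left n h2k)),
      Nat.sub_add_cancel (by omega)]
  rw [hfloor, alpha]
  refine indepNum_eq_of_forall_le (fun S hS => card_le_of_isIndep hke hk hn hS)
    ⟨extremalSet n k (n / (2 * k)) (n % (2 * k)), ?_,
      card_extremalSet (Nat.mod_lt _ h2k) (Nat.div_add_mod n _)⟩
  exact isIndep_extremalSet hke hk (Nat.div_pos hn.le h2k) (Nat.mod_lt _ h2k) hres
    (Nat.div_add_mod n _)

end GP
end

section
/- If n and k are both odd with n > 2k ≥ 2 and n ≥ 5(k+1)/2, then α(P(n,k)) ≥ ⌊4n/5⌋ (equivalently, β(P(n,k)) ≤ n + ⌈n/5⌉). -/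
/-!
Take the outer vertices `u_0, u_2, …, u_{n-3}` and the inner vertices `v_k, v_{k+2}, …, v_{n-2}`.
As `k` is odd, an edge `u_i u_{i+1}`, `u_i v_i` or `v_j v_{j+k}` joins indices of different parity
unless it wraps around modulo `n`, and the wrapping edges `u_{n-1} u_0` and `v_j v_{j+k-n}` leave
the set at `u_{n-1}` resp. at `v_{j+k-n}`, whose index is below `k`. So the set is independent; it
has `n - (k+1)/2` elements, which is at least `⌊4n/5⌋` exactly when `n ≥ 5(k+1)/2`.
-/

namespace GP

theorem le_indepNum {V : Type*} [Fintype V] {G : SimpleGraph V} {s : Finset V}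
    (hs : IsIndep G s) : s.card ≤ indepNum G :=
  le_csSup ⟨Fintype.card V, by rintro m ⟨t, -, rfl⟩; exact t.card_le_univ⟩ ⟨s, hs, rfl⟩

theorem natCast_add_natCast_eq_natCast {n a b c : ℕ} (hb : b < n) (h : (a : ZMod n) + c = b) :
    a + c = b ∨ a + c = b + n ∨ 2 * n ≤ a + c := by
  rw [← Nat.cast_add, ZMod.natCast_eq_natCast_iff', Nat.mod_eq_of_lt hb] at h
  rcases lt_or_ge (a + c) n with hlt | hge
  · rw [Nat.mod_eq_of_lt hlt] at h
    omega
  · rcases lt_or_ge (a + c) (2 * n) with hlt | hge'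
    · rw [Nat.mod_eq_sub_mod hge, Nat.mod_eq_of_lt (by omega)] at h
      omega
    · omega

def parityIndepSet (n k : ℕ) : Finset (ZMod n ⊕ ZMod n) :=
  (Finset.range ((n - 1) / 2)).image (fun t => u n ((2 * t : ℕ) : ZMod n)) ∪
  (Finset.range ((n - k) / 2)).image (fun t => v n ((k + 2 * t : ℕ) : ZMod n))

theorem not_adjFun_of_mem_parityIndepSet {n k : ℕ} (hk : Odd k) {x y : ZMod n ⊕ ZMod n}
    (hx : x ∈ parityIndepSet n k) (hy : y ∈ parityIndepSet n k) : ¬ adjFun n k x y := by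
  obtain ⟨b, rfl⟩ := hk
  simp only [parityIndepSet, u, v, Finset.mem_union, Finset.mem_image, Finset.mem_range] at hx hy
  rcases hx with ⟨s, hs, rfl⟩ | ⟨s, hs, rfl⟩ <;> rcases hy with ⟨t, ht, rfl⟩ | ⟨t, ht, rfl⟩ <;>
    simp only [adjFun, not_false_eq_true] <;> intro h
  · rw [← Nat.cast_one] at h
    have := natCast_add_natCast_eq_natCast (c := 1) (by omega : 2 * t < n) h.symm
    omega
  · have := ((ZMod.natCast_eq_natCast_iff _ _ _).mp h).eq_of_lt_of_lt (by omega) (by omega)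
    omega
  · have := natCast_add_natCast_eq_natCast (by omega : 2 * b + 1 + 2 * t < n) h.symm
    omega

theorem isIndep_parityIndepSet {n k : ℕ} (hk : Odd k) : IsIndep (P n k) (parityIndepSet n k) := by
  intro x hx y hy hxy
  rw [P, SimpleGraph.fromRel_adj] at hxy
  exact hxy.2.elim (not_adjFun_of_mem_parityIndepSet hk hx hy)
    (not_adjFun_of_mem_parityIndepSet hk hy hx)

theorem card_parityIndepSet (n k : ℕ) :
    (parityIndepSet n k).card = (n - 1) / 2 + (n - k) / 2 := by
  have natCast_inj {a b : ℕ} (ha : a < n) (hb : b < n) (h : (a : ZMod n) = b) : a = b :=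
    ((ZMod.natCast_eq_natCast_iff _ _ _).mp h).eq_of_lt_of_lt ha hb
  rw [parityIndepSet, Finset.card_union_of_disjoint, Finset.card_image_of_injOn,
    Finset.card_image_of_injOn, Finset.card_range, Finset.card_range]
  · intro s hs t ht h
    simp only [Finset.coe_range, Set.mem_Iio, v, Sum.inr.injEq] at hs ht h
    have := natCast_inj (by omega) (by omega) h
    omega
  · intro s hs t ht h
    simp only [Finset.coe_range, Set.mem_Iio, u, Sum.inl.injEq] at hs ht h
    have := natCast_inj (by omega) (by omega) h
    omega
  · exact Finset.disjoint_left.2 (by simp [u, v])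

theorem bhm_conjecture_odd_odd_general (n k : ℕ) (hno : Odd n) (hko : Odd k)
    (hn2 : 5 * (k + 1) / 2 ≤ n) :
    4 * n / 5 ≤ alpha n k := by
  have : NeZero n := ⟨by rintro rfl; exact Nat.not_odd_zero hno⟩
  calc 4 * n / 5 ≤ (n - 1) / 2 + (n - k) / 2 := by
        obtain ⟨a, rfl⟩ := hno
        obtain ⟨b, rfl⟩ := hko
        omega
    _ = (parityIndepSet n k).card := (card_parityIndepSet n k).symm
    _ ≤ alpha n k := le_indepNum (isIndep_parityIndepSet hko)

/-- If `n` and `k` are both odd with `n > 2k ≥ 2` and `n ≥ 5(k+1)/2`,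
then `α(P(n,k)) ≥ ⌊4n/5⌋`. -/
theorem bhm_conjecture_odd_odd (n k : ℕ) (hno : Odd n) (hko : Odd k) (hk : 1 ≤ k)
    (hn : 2 * k < n) (hn2 : 5 * (k + 1) / 2 ≤ n) :
    4 * n / 5 ≤ alpha n k :=
  bhm_conjecture_odd_odd_general n k hno hko hn2

end GP
end

section
/- If n and k are both even with n > 2k ≥ 2, then α(P(n,k)) ≥ ⌊4n/5⌋ (equivalently, β(P(n,k)) ≤ n + ⌈n/5⌉). -/
/-!
An independent set of `P(n,k)` is a set `A` of outer indices containing no two cyclically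
consecutive ones, together with a disjoint set `B` of inner indices containing no two at cyclic
distance `k`. For `k = 2`, the sets `A = {i ≡ 1, 4 mod 5}` and `B = {i ≡ 2, 3 mod 5}` miss only the
multiples of `5`. For even `k ≥ 4`, put each `i` of an initial interval `[0, L)` into `B` or `A`
according as `i + ⌊i/k⌋` is even or odd, except that the odd multiples of `k` are left out of `A`,
and on `[L, n)` take every second outer vertex. This yields at least
`L - ⌈(L - k)/(2k)⌉ + (n - L)/2` vertices, which is `≥ ⌊4n/5⌋` for `L = 2k` when `k` is large
compared with `n`, and for `L = n - k` otherwise.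
-/

namespace GP

open Finset

lemma card_le_alpha {n k : ℕ} [NeZero n] {s : Finset (ZMod n ⊕ ZMod n)}
    (hs : IsIndep (P n k) s) : #s ≤ alpha n k :=
  le_csSup ⟨Fintype.card _, by rintro m ⟨t, -, rfl⟩; exact card_le_univ t⟩ ⟨s, hs, rfl⟩

lemma card_add_card_le_alpha {n k : ℕ} [NeZero n] {A B : Finset (ZMod n)}
    (hAB : Disjoint A B) (hA : ∀ i ∈ A, i + 1 ∉ A) (hB : ∀ i ∈ B, i + k ∉ B) :
    #A + #B ≤ alpha n k := by
  rw [← card_disjSum]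
  refine card_le_alpha ?_
  rintro (i | i) hi (j | j) hj ⟨-, h | h⟩ <;>
    simp only [adjFun, inl_mem_disjSum, inr_mem_disjSum] at hi hj h <;> subst h
  · exact hA i hi hj
  · exact hA j hj hi
  · exact disjoint_left.1 hAB hi hj
  · exact disjoint_left.1 hAB hj hi
  · exact hB i hi hj
  · exact hB j hj hi

lemma card_add_card_le_alpha_of_nat {n k : ℕ} [NeZero n] {A B : Finset ℕ}
    (hAn : A ⊆ range n) (hBn : B ⊆ range n) (hAB : Disjoint A B)
    (hA : ∀ i ∈ A, (i + 1) % n ∉ A) (hB : ∀ i ∈ B, (i + k) % n ∉ B) :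
    #A + #B ≤ alpha n k := by
  have hinj : ∀ {s : Finset ℕ}, s ⊆ range n → Set.InjOn (Nat.cast : ℕ → ZMod n) s :=
    fun hs a ha b hb hab => by
      rwa [ZMod.natCast_eq_natCast_iff', Nat.mod_eq_of_lt (mem_range.1 (hs ha)),
        Nat.mod_eq_of_lt (mem_range.1 (hs hb))] at hab
  have hshift : ∀ {s : Finset ℕ} (d : ℕ), s ⊆ range n → (∀ i ∈ s, (i + d) % n ∉ s) →
      ∀ x ∈ s.image (Nat.cast : ℕ → ZMod n), x + d ∉ s.image Nat.cast := by
    intro s d hs h x hx hxd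
    obtain ⟨i, hi, rfl⟩ := mem_image.1 hx
    obtain ⟨j, hj, hji⟩ := mem_image.1 hxd
    have : j = (i + d) % n := by
      rw [← Nat.mod_eq_of_lt (mem_range.1 (hs hj)), ← ZMod.natCast_eq_natCast_iff',
        hji, Nat.cast_add]
    exact h i hi (this ▸ hj)
  rw [← card_image_of_injOn (hinj hAn), ← card_image_of_injOn (hinj hBn)]
  refine card_add_card_le_alpha ?_ (by simpa using hshift 1 hAn hA) (hshift k hBn hB)
  simp only [disjoint_left, mem_image, not_exists, not_and]
  rintro _ ⟨i, hi, rfl⟩ j hj hji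
  exact disjoint_left.1 hAB hi (hinj subset_rfl (hBn hj) (hAn hi) hji ▸ hj)

lemma mod_eq_ite_of_lt_two_mul {x n : ℕ} (h : x < 2 * n) :
    x % n = if x < n then x else x - n := by
  split_ifs with hx
  · exact Nat.mod_eq_of_lt hx
  · rw [Nat.mod_eq_sub_mod (not_lt.1 hx), Nat.mod_eq_of_lt (by omega)]

lemma four_mul_div_five_le_alpha_two (n : ℕ) [NeZero n] : 4 * n / 5 ≤ alpha n 2 := by
  set A : Finset ℕ := {i ∈ range n | i % 5 = 1 ∨ i % 5 = 4}
  set B : Finset ℕ := {i ∈ range n | i % 5 = 2 ∨ i % 5 = 3}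
  have hAB : Disjoint A B := disjoint_filter.2 fun i _ hi => by omega
  have hA : ∀ i ∈ A, (i + 1) % n ∉ A := by
    intro i hi hi'
    simp only [A, mem_filter, mem_range] at hi hi'
    rw [mod_eq_ite_of_lt_two_mul (by omega)] at hi'
    split_ifs at hi' <;> omega
  have hB : ∀ i ∈ B, (i + 2) % n ∉ B := by
    intro i hi hi'
    simp only [B, mem_filter, mem_range] at hi hi'
    rw [mod_eq_ite_of_lt_two_mul (by omega)] at hi'
    split_ifs at hi' <;> omega
  have hcover : range n ⊆ A ∪ B ∪ (range ((n + 4) / 5)).image (5 * ·) := by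
    intro i hi
    simp only [A, B, mem_union, mem_filter, mem_image, mem_range] at hi ⊢
    by_cases h5 : i % 5 = 0
    · exact Or.inr ⟨i / 5, by omega, by omega⟩
    · omega
  have hcount : n ≤ #A + #B + (n + 4) / 5 := calc
    n = #(range n) := (card_range n).symm
    _ ≤ #(A ∪ B ∪ (range ((n + 4) / 5)).image (5 * ·)) := card_le_card hcover
    _ ≤ #A + #B + (n + 4) / 5 := by
      grw [card_union_le, card_union_le, card_image_le, card_range]
  have hα : #A + #B ≤ alpha n 2 :=
    card_add_card_le_alpha_of_nat (filter_subset _ _) (filter_subset _ _) hAB hA hB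
  omega

def innerPattern (k L : ℕ) : Finset ℕ := {i ∈ range L | i % 2 = i / k % 2}

def outerPattern (n k L : ℕ) : Finset ℕ :=
  {i ∈ range L | i % 2 ≠ i / k % 2 ∧ ¬ k ∣ i} ∪ (range ((n - L) / 2)).image (L + 2 * · + 1)

section Pattern

variable {n k L : ℕ}

lemma mem_outerPattern {i : ℕ} :
    i ∈ outerPattern n k L ↔
      (i < L ∧ i % 2 ≠ i / k % 2 ∧ ¬ k ∣ i) ∨ (L < i ∧ i < n ∧ (i - L) % 2 = 1) := by
  simp only [outerPattern, mem_union, mem_filter, mem_range, mem_image]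
  refine or_congr Iff.rfl ⟨?_, fun h => ⟨(i - L) / 2, by omega, by omega⟩⟩
  rintro ⟨t, ht, rfl⟩
  omega

lemma succ_mod_notMem_outerPattern (hL : L ≤ n) {i : ℕ} (hi : i ∈ outerPattern n k L) :
    (i + 1) % n ∉ outerPattern n k L := by
  rw [mem_outerPattern] at hi
  rw [mod_eq_ite_of_lt_two_mul (by omega)]
  split_ifs with hlt
  · rw [mem_outerPattern]
    by_cases hdvd : k ∣ i + 1
    · omega
    · have := Nat.succ_div_of_not_dvd hdvd
      omega
  · rw [show i + 1 - n = 0 by omega, mem_outerPattern]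
    simp

lemma add_mod_notMem_innerPattern (hn : Even n) (hk : Even k) (hk0 : 0 < k) (hkn : k < n)
    (hL : L + k ≤ n ∨ (2 * k ∣ L ∧ L ≤ n)) {i : ℕ} (hi : i ∈ innerPattern k L) :
    (i + k) % n ∉ innerPattern k L := by
  simp only [innerPattern, mem_filter, mem_range] at hi ⊢
  rw [Nat.even_iff] at hn hk
  rw [mod_eq_ite_of_lt_two_mul (by omega)]
  split_ifs with hlt
  · rw [Nat.add_div_right _ hk0]
    omega
  rcases hL with hL | ⟨⟨m, rfl⟩, hL⟩
  · omega
  -- `v_i` wraps around only from the last block of `[0, L)`, which has odd index.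
  have hlast : i / k < 2 * m ∧ 2 * m < i / k + 2 := by
    rw [show 2 * k * m = k * (2 * m) by ring] at hi hL
    have hlo := Nat.mul_div_le i k
    have hhi := Nat.lt_mul_div_succ i hk0
    constructor
    · exact Nat.lt_of_mul_lt_mul_left (hlo.trans_lt hi.1)
    · rw [mul_add] at hhi
      exact Nat.lt_of_mul_lt_mul_left (a := k) (by rw [mul_add]; omega)
  rw [Nat.div_eq_of_lt (by omega : i + k - n < k)]
  omega

lemma mem_image_odd_mul_of_dvd (hk : Even k) (hk0 : 0 < k) {i : ℕ} (hiL : i < L)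
    (hi : i % 2 ≠ i / k % 2) (hdvd : k ∣ i) :
    i ∈ (range ((L + k - 1) / (2 * k))).image fun t => (2 * t + 1) * k := by
  obtain ⟨m, rfl⟩ := hdvd
  rw [Nat.mul_div_cancel_left m hk0, Nat.mul_mod, Nat.even_iff.1 hk] at hi
  have hm : 2 * (m / 2) + 1 = m := by omega
  refine mem_image.2 ⟨m / 2, mem_range.2 ((Nat.le_div_iff_mul_le (by omega)).2 ?_), ?_⟩
  · show (m / 2 + 1) * (2 * k) ≤ L + k - 1
    have : (m / 2 + 1) * (2 * k) = k * m + k := by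
      rw [show (m / 2 + 1) * (2 * k) = (2 * (m / 2) + 1) * k + k by ring, hm, mul_comm]
    omega
  · rw [hm, mul_comm]

lemma le_card_innerPattern_add_card_outerPattern (hk : Even k) (hk0 : 0 < k) :
    L - (L + k - 1) / (2 * k) + (n - L) / 2 ≤ #(innerPattern k L) + #(outerPattern n k L) := by
  set dense : Finset ℕ := {i ∈ range L | i % 2 ≠ i / k % 2 ∧ ¬ k ∣ i}
  set gaps : Finset ℕ := (range ((L + k - 1) / (2 * k))).image fun t => (2 * t + 1) * k
  have hcover : range L ⊆ innerPattern k L ∪ dense ∪ gaps := by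
    intro i hi
    by_cases hin : i % 2 = i / k % 2
    · simp_all [innerPattern]
    by_cases hdvd : k ∣ i
    · exact mem_union_right _ (mem_image_odd_mul_of_dvd hk hk0 (mem_range.1 hi) hin hdvd)
    · simp_all [dense]
  have hsparse : Disjoint dense ((range ((n - L) / 2)).image (L + 2 * · + 1)) := by
    simp only [dense, disjoint_left, mem_filter, mem_range, mem_image, not_exists, not_and]
    omega
  have hcard : #(outerPattern n k L) = #dense + (n - L) / 2 := by
    rw [outerPattern, card_union_of_disjoint hsparse,
      card_image_of_injective _ fun a b h => by simpa using h, card_range]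
  have hL : L ≤ #(innerPattern k L) + #dense + (L + k - 1) / (2 * k) := calc
    L = #(range L) := (card_range L).symm
    _ ≤ #(innerPattern k L ∪ dense ∪ gaps) := card_le_card hcover
    _ ≤ #(innerPattern k L) + #dense + (L + k - 1) / (2 * k) := by
      grw [card_union_le, card_union_le, card_image_le, card_range]
  omega

lemma le_alpha_of_pattern (hn : Even n) (hk : Even k) (hk0 : 0 < k) (hkn : k < n)
    (hL : L + k ≤ n ∨ (2 * k ∣ L ∧ L ≤ n)) :
    L - (L + k - 1) / (2 * k) + (n - L) / 2 ≤ alpha n k := by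
  have : NeZero n := ⟨by omega⟩
  have hLn : L ≤ n := by omega
  refine (le_card_innerPattern_add_card_outerPattern hk hk0).trans ?_
  rw [add_comm]
  refine card_add_card_le_alpha_of_nat ?_ ?_ ?_ (fun i hi => succ_mod_notMem_outerPattern hLn hi)
    (fun i hi => add_mod_notMem_innerPattern hn hk hk0 hkn hL hi)
  · intro i hi
    rw [mem_outerPattern] at hi
    exact mem_range.2 (by omega)
  · exact (filter_subset _ _).trans (range_subset_range.2 hLn)
  · rw [disjoint_left]
    intro i hi hi'
    rw [mem_outerPattern] at hi
    simp only [innerPattern, mem_filter, mem_range] at hi'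
    omega

end Pattern

lemma four_mul_div_five_le_of_lt {n k : ℕ} (hn : Even n) (hk : Even k) (hk4 : 4 ≤ k)
    (h : n / 2 + k - 1 < 4 * n / 5) : 4 * n / 5 ≤ n - k - (n - 1) / (2 * k) + k / 2 := by
  obtain ⟨m, rfl⟩ := hn
  -- For small `k` the bound depends on the roundings, so it is checked with `k` fixed.
  rcases (show k = 4 ∨ k = 6 ∨ k = 8 ∨ 10 ≤ k by grind) with rfl | rfl | rfl | hk10
  · omega
  · omega
  · omega
  obtain ⟨j, rfl⟩ := hk
  have hg := Nat.div_mul_le_self (m + m - 1) (2 * (j + j))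
  generalize (m + m - 1) / (2 * (j + j)) = g at hg ⊢
  have h3 : 10 * j ≤ 3 * m := by omega
  have hg' : g * (4 * j) + 1 ≤ 2 * m := by rw [show 4 * j = 2 * (j + j) by ring]; omega
  have : 5 * (j + g) ≤ 2 * m := by nlinarith
  omega

/-- If `n` and `k` are both even with `n > 2k ≥ 2`, then
`α(P(n,k)) ≥ ⌊4n/5⌋`. -/
theorem bhm_conjecture_even_even (n k : ℕ) (hne : Even n) (hke : Even k) (hk : 1 ≤ k)
    (hn : 2 * k < n) :
    4 * n / 5 ≤ alpha n k := by
  obtain rfl | hk4 : k = 2 ∨ 4 ≤ k := by obtain ⟨j, rfl⟩ := hke; omega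
  · have : NeZero n := ⟨by omega⟩
    exact four_mul_div_five_le_alpha_two n
  by_cases hbig : 4 * n / 5 ≤ n / 2 + k - 1
  · have hα := le_alpha_of_pattern (L := 2 * k) hne hke (by omega) (by omega)
      (Or.inr ⟨dvd_rfl, hn.le⟩)
    rw [Nat.div_eq_of_lt_le (k := 1) (by omega) (by omega)] at hα
    omega
  · have hα := le_alpha_of_pattern (L := n - k) hne hke (by omega) (by omega) (Or.inl (by omega))
    rw [show n - k + k - 1 = n - 1 by omega, show n - (n - k) = k by omega] at hα
    have := four_mul_div_five_le_of_lt hne hke hk4 (not_le.1 hbig)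
    omega

end GP
end
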